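/- Let J₁, J₂, I be lattice line segments in ℤ^3 (segments with endpoints in the lattice) whose direction vectors are linearly independent. Then the Minkowski sum P = J₁ + J₂ + I (a lattice parallelotope) is a normal lattice polytope. -/

import Mathlib

open Set Pointwise

/-- `x` is a lattice point (all coordinates are integers). -/
def IsLat {n : ℕ} (x : Fin n → ℝ) : Prop := ∀ i, ∃ m : ℤ, x i = (m : ℝ)

/-- The set of lattice points of `P`. -/
def latPts {n : ℕ} (P : Set (Fin n → ℝ)) : Set (Fin n → ℝ) := {x ∈ P | IsLat x}

/-- `P` is a lattice polytope: the convex hull of finitely many lattice points. -/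
def IsLatticePolytope {n : ℕ} (P : Set (Fin n → ℝ)) : Prop :=
  ∃ S : Finset (Fin n → ℝ), (∀ x ∈ S, IsLat x) ∧ P = convexHull ℝ (S : Set (Fin n → ℝ))

/-- The dimension of a polytope: the dimension of its affine hull. -/
noncomputable def polyDim {n : ℕ} (P : Set (Fin n → ℝ)) : ℕ :=
  Module.finrank ℝ (affineSpan ℝ P).direction

/-- `P` is normal: for every `k ≥ 1`, every lattice point of the dilate `k • P`
is a sum of `k` lattice points of `P`. -/
def IsNormal {n : ℕ} (P : Set (Fin n → ℝ)) : Prop :=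
  ∀ k : ℕ, 1 ≤ k → ∀ v ∈ latPts ((k : ℝ) • P),
    ∃ u : Fin k → (Fin n → ℝ), (∀ i, u i ∈ latPts P) ∧ v = ∑ i, u i

/-! A lattice point `v` of `k • P`, where `P` is a sum of lattice segments `[aᵢ, bᵢ]`, is a sum of
`k` points of `P` all but one of which are lattice points: write `v = k • ∑ (aᵢ + tᵢ • (bᵢ - aᵢ))`,
split `k tᵢ = cᵢ + rᵢ` with `cᵢ ∈ {0, …, k - 1}` and `rᵢ ∈ [0, 1]`, and take `cᵢ` copies of `bᵢ`,
`k - 1 - cᵢ` copies of `aᵢ` and the remainder `aᵢ + rᵢ • (bᵢ - aᵢ)`. The one point that collects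
the remainders is `v` minus lattice points, hence a lattice point as well. -/

def latticeAddSubgroup (n : ℕ) : AddSubgroup (Fin n → ℝ) where
  carrier := {x | IsLat x}
  zero_mem' _ := ⟨0, by simp⟩
  add_mem' {x y} hx hy i := by
    obtain ⟨a, ha⟩ := hx i
    obtain ⟨b, hb⟩ := hy i
    exact ⟨a + b, by simp [ha, hb]⟩
  neg_mem' {x} hx i := by
    obtain ⟨a, ha⟩ := hx i
    exact ⟨-a, by simp [ha]⟩

lemma isLat_iff_mem_latticeAddSubgroup {n : ℕ} {x : Fin n → ℝ} :
    IsLat x ↔ x ∈ latticeAddSubgroup n := Iff.rfl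

def HasLatticeSplitting {n : ℕ} (P : Set (Fin n → ℝ)) : Prop :=
  ∀ m : ℕ, ∀ x ∈ ((m + 1 : ℕ) : ℝ) • P,
    ∃ u : Fin m → Fin n → ℝ, (∀ i, u i ∈ latPts P) ∧ ∃ y ∈ P, x = ∑ i, u i + y

lemma exists_nat_le_le_add_one {m : ℕ} {s : ℝ} (h0 : 0 ≤ s) (h1 : s ≤ m + 1) :
    ∃ c : ℕ, c ≤ m ∧ (c : ℝ) ≤ s ∧ s ≤ c + 1 := by
  rcases le_total ⌊s⌋₊ m with h | h
  · exact ⟨⌊s⌋₊, h, Nat.floor_le h0, (Nat.lt_floor_add_one s).le⟩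
  · exact ⟨m, le_rfl, (Nat.cast_le.2 h).trans (Nat.floor_le h0), h1⟩

lemma hasLatticeSplitting_segment {n : ℕ} {a b : Fin n → ℝ} (ha : IsLat a) (hb : IsLat b) :
    HasLatticeSplitting (segment ℝ a b) := by
  intro m x hx
  obtain ⟨p, hp, rfl⟩ := hx
  rw [segment_eq_image'] at hp ⊢
  obtain ⟨t, ⟨ht0, ht1⟩, rfl⟩ := hp
  obtain ⟨c, hcm, hc0, hc1⟩ :=
    exists_nat_le_le_add_one (m := m) (s := (m + 1) * t) (by positivity) (by nlinarith)
  let w : Fin m → ℝ := fun i => if (i : ℕ) < c then 1 else 0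
  have hw : ∑ i, w i = c := by
    simp [w, Finset.sum_boole, Fin.card_filter_val_lt, hcm]
  refine ⟨fun i => a + w i • (b - a), fun i => ⟨⟨w i, ?_, rfl⟩, ?_⟩,
    a + ((m + 1) * t - c) • (b - a), ⟨_, ⟨by linarith, by linarith⟩, rfl⟩, ?_⟩
  · simp only [w]; split_ifs <;> simp
  · simp only [w]; split_ifs <;> simpa
  · simp only [Finset.sum_add_distrib, ← Finset.sum_smul, hw, Finset.sum_const, Finset.card_univ,
      Fintype.card_fin]
    push_cast
    module

lemma HasLatticeSplitting.add {n : ℕ} {P Q : Set (Fin n → ℝ)} (hP : HasLatticeSplitting P)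
    (hQ : HasLatticeSplitting Q) : HasLatticeSplitting (P + Q) := by
  rintro m _ ⟨_, ⟨p, hp, q, hq, rfl⟩, rfl⟩
  obtain ⟨u, hu, y, hy, hpy⟩ := hP m _ (smul_mem_smul_set hp)
  obtain ⟨u', hu', y', hy', hqy⟩ := hQ m _ (smul_mem_smul_set hq)
  refine ⟨fun i => u i + u' i, fun i => ⟨add_mem_add (hu i).1 (hu' i).1, ?_⟩,
    y + y', add_mem_add hy hy', ?_⟩
  · exact (latticeAddSubgroup n).add_mem (hu i).2 (hu' i).2
  · change _ • (p + q) = _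
    rw [smul_add, hpy, hqy, Finset.sum_add_distrib]
    abel

lemma HasLatticeSplitting.isNormal {n : ℕ} {P : Set (Fin n → ℝ)} (hP : HasLatticeSplitting P) :
    IsNormal P := by
  rintro k hk v ⟨hv, hvLat⟩
  obtain ⟨m, rfl⟩ := Nat.exists_eq_add_of_le' hk
  obtain ⟨u, hu, y, hy, rfl⟩ := hP m v hv
  have hyLat : IsLat y := by
    rw [isLat_iff_mem_latticeAddSubgroup] at hvLat ⊢
    simpa using sub_mem hvLat (sum_mem fun i (_ : i ∈ Finset.univ) => (hu i).2)
  exact ⟨Fin.cons y u, Fin.cases ⟨hy, hyLat⟩ hu, by rw [Fin.sum_cons, add_comm]⟩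

theorem stmt4_general (a₁ b₁ a₂ b₂ a₃ b₃ : Fin 3 → ℝ)
    (h₁ : IsLat a₁) (h₂ : IsLat b₁) (h₃ : IsLat a₂) (h₄ : IsLat b₂)
    (h₅ : IsLat a₃) (h₆ : IsLat b₃) :
    IsNormal (segment ℝ a₁ b₁ + segment ℝ a₂ b₂ + segment ℝ a₃ b₃) :=
  (((hasLatticeSplitting_segment h₁ h₂).add (hasLatticeSplitting_segment h₃ h₄)).add
    (hasLatticeSplitting_segment h₅ h₆)).isNormal

/-- A lattice parallelotope, the Minkowski sum of three lattice segments with linearly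
independent directions, is normal. -/
theorem stmt4 (a₁ b₁ a₂ b₂ a₃ b₃ : Fin 3 → ℝ)
    (h₁ : IsLat a₁) (h₂ : IsLat b₁) (h₃ : IsLat a₂) (h₄ : IsLat b₂)
    (h₅ : IsLat a₃) (h₆ : IsLat b₃)
    (hind : LinearIndependent ℝ ![b₁ - a₁, b₂ - a₂, b₃ - a₃]) :
    IsNormal (segment ℝ a₁ b₁ + segment ℝ a₂ b₂ + segment ℝ a₃ b₃) :=
  stmt4_general a₁ b₁ a₂ b₂ a₃ b₃ h₁ h₂ h₃ h₄ h₅ h₆
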